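/- Let a ∈ Adj(G,E), b ∈ Adj(G,F), a_* ∈ Adj(H,F), b_* ∈ Adj(H,E) satisfy b*a_* = a*b_*, and assume Null(a*) = {0} and Null(a_**) = {0}. Then Null(a) ⊆ Null(b) and Null(a_*) ⊆ Null(b_*), so the operators t (D(t) = Range(a), t(ax) := bx) and t' (D(t') = Range(a_*), t'(a_* y) := b_* y) are well-defined; they are essentially defined, orthogonally closable, and satisfy (t')** ⊆ t* and t** ⊆ (t')*. If in addition t and t' are closed and a b* = b_* a_**, then t* = t' and t is graph regular. -/

import Mathlib

open scoped RightActions Pointwise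

noncomputable section

namespace CStarReg

variable (A : Type*)

/-- The orthogonal complement of a subset of a Hilbert C*-module with respect to the
`A`-valued inner product. -/
def ortho {E : Type*} [Zero A] [Inner A E] (S : Set E) : Set E :=
  {x | ∀ y ∈ S, (inner A x y : A) = 0}

/-- A subset of a Hilbert C*-module is *essential* if its orthogonal complement is trivial. -/
def IsEssential {E : Type*} [Zero A] [Zero E] [Inner A E] (S : Set E) : Prop :=
  ortho A S = {0}

/-- A subset is *orthogonally closed* if it coincides with its double orthogonal complement. -/
def IsOrthoClosedSet {E : Type*} [Zero A] [Inner A E] (S : Set E) : Prop :=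
  ortho A (ortho A S) = S

/-- The `A`-valued inner product on the direct sum `E ⊕ F` of two Hilbert C*-modules. -/
instance prodInner {E F : Type*} [Add A] [Inner A E] [Inner A F] : Inner A (E × F) :=
  ⟨fun p q => (inner A p.1 q.1 : A) + (inner A p.2 q.2 : A)⟩

/-- A (not necessarily densely or essentially defined) `ℂ`-linear and `A`-linear operator
from `E` to `F`, encoded by its graph. -/
structure Unbounded (E F : Type*) [AddCommGroup E] [AddCommGroup F]
    [Module ℂ E] [Module ℂ F] [SMul Aᵐᵒᵖ E] [SMul Aᵐᵒᵖ F] where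
  graph : Set (E × F)
  zero_mem : ((0 : E), (0 : F)) ∈ graph
  add_mem : ∀ ⦃p q : E × F⦄, p ∈ graph → q ∈ graph → p + q ∈ graph
  smul_mem : ∀ (c : ℂ) ⦃p : E × F⦄, p ∈ graph → c • p ∈ graph
  smulA_mem : ∀ (a : A) ⦃p : E × F⦄, p ∈ graph → (p.1 <• a, p.2 <• a) ∈ graph
  single_valued : ∀ ⦃y : F⦄, ((0 : E), y) ∈ graph → y = 0

/-- An adjointable (everywhere defined, with everywhere defined adjoint) operator between
Hilbert C*-modules. -/
structure Adjointable (E F : Type*) [Inner A E] [Inner A F] where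
  toFun : E → F
  adjFun : F → E
  adjoint_eq : ∀ (x : E) (y : F), (inner A (toFun x) y : A) = inner A x (adjFun y)

section Operators

variable {A}
variable {E F G H : Type*} [AddCommGroup E] [AddCommGroup F] [AddCommGroup G] [AddCommGroup H]
  [Module ℂ E] [Module ℂ F] [Module ℂ G] [Module ℂ H]
  [SMul Aᵐᵒᵖ E] [SMul Aᵐᵒᵖ F] [SMul Aᵐᵒᵖ G] [SMul Aᵐᵒᵖ H]

namespace Unbounded

/-- The domain of an operator. -/
def dom (t : Unbounded A E F) : Set E := Prod.fst '' t.graph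

/-- The range of an operator. -/
def ran (t : Unbounded A E F) : Set F := Prod.snd '' t.graph

/-- The null space of an operator. -/
def ker (t : Unbounded A E F) : Set E := {x | (x, (0 : F)) ∈ t.graph}

/-- `t ⊆ s`, i.e. `s` extends `t`. -/
def le (t s : Unbounded A E F) : Prop := t.graph ⊆ s.graph

end Unbounded

variable (A)

section WithInner

variable [Inner A E] [Inner A F] [Inner A G] [Inner A H] [Add A]

/-- The graph of the adjoint: `(y, z)` belongs to `adjSet A g` iff
`⟪t x, y⟫ = ⟪x, z⟫` for all `(x, t x) ∈ g`. -/
def adjSet (g : Set (E × F)) : Set (F × E) :=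
  {q | ∀ p ∈ g, (inner A p.2 q.1 : A) = inner A p.1 q.2}

end WithInner

/-- Composition of graphs. -/
def compSet (g₂ : Set (F × G)) (g₁ : Set (E × F)) : Set (E × G) :=
  {p | ∃ y, (p.1, y) ∈ g₁ ∧ (y, p.2) ∈ g₂}

/-- The graph of `1 + s` where `g` is the graph of `s`. -/
def oneAddSet (g : Set (E × E)) : Set (E × E) :=
  {p | ∃ y, (p.1, y) ∈ g ∧ p.2 = p.1 + y}

variable {A}

namespace Unbounded

variable [Inner A E] [Inner A F] [Add A] [Zero A]

/-- The graph of the adjoint operator `t*`. -/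
def adjGraph (t : Unbounded A E F) : Set (F × E) := adjSet A t.graph

/-- The domain of the adjoint operator `t*`. -/
def adjDom (t : Unbounded A E F) : Set F := Prod.fst '' (adjSet A t.graph)

/-- `s` is the adjoint of `t`. -/
def IsAdjointOf (s : Unbounded A F E) (t : Unbounded A E F) : Prop :=
  s.graph = adjSet A t.graph

/-- `t` is essentially defined, i.e. its domain has trivial orthogonal complement. -/
def EssentiallyDefined (t : Unbounded A E F) : Prop := IsEssential A t.dom

/-- `t` is orthogonally closed, i.e. its graph coincides with its double orthogonal
complement in `E ⊕ F`. -/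
def OrthoClosed (t : Unbounded A E F) : Prop := ortho A (ortho A t.graph) = t.graph

/-- `t` is graph regular: essentially defined, orthogonally closed, and its graph is
orthogonally complemented in `E ⊕ F`. -/
def GraphRegular (t : Unbounded A E F) : Prop :=
  t.EssentiallyDefined ∧ t.OrthoClosed ∧ t.graph + ortho A t.graph = Set.univ

/-- The graph of `t* t`. -/
def adjCompGraph (t : Unbounded A E F) : Set (E × E) := compSet (adjSet A t.graph) t.graph

/-- The graph of `t t*`. -/
def compAdjGraph (t : Unbounded A E F) : Set (F × F) := compSet t.graph (adjSet A t.graph)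

/-- `a = (1 + t* t)⁻¹` as an everywhere defined map. -/
def IsAt (t : Unbounded A E F) (a : E → E) : Prop :=
  ∀ x : E, (a x, x) ∈ oneAddSet t.adjCompGraph

/-- `a⋆ = (1 + t t*)⁻¹` as an everywhere defined map. -/
def IsAtStar (t : Unbounded A E F) (a : F → F) : Prop :=
  ∀ y : F, (a y, y) ∈ oneAddSet t.compAdjGraph

/-- `b = t ∘ a` as an everywhere defined map (where `a = (1 + t* t)⁻¹`, this is `b_t`). -/
def IsBt (t : Unbounded A E F) (a : E → E) (b : E → F) : Prop :=
  ∀ x : E, (a x, b x) ∈ t.graph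

end Unbounded

namespace Adjointable

variable [Inner A E] [Inner A F]

/-- Self-adjointness of an adjointable operator. -/
def IsSelfAdj (a : Adjointable A E E) : Prop := a.adjFun = a.toFun

/-- Positivity of an adjointable operator: `⟪x, a x⟫ ≥ 0` for all `x`. -/
def Nonneg [LE A] [Zero A] (a : Adjointable A E E) : Prop :=
  ∀ x : E, (0 : A) ≤ inner A x (a.toFun x)

/-- `r` is the positive square root of `a` in the C*-algebra `Adj(E)`. -/
def IsPosSqrtOf [LE A] [Zero A] (r a : Adjointable A E E) : Prop :=
  r.Nonneg ∧ r.adjFun = r.toFun ∧ ∀ x : E, r.toFun (r.toFun x) = a.toFun x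

/-- The kernel of an adjointable operator is trivial. -/
def KerTrivial (a : Adjointable A E F) : Prop := ∀ x : E, a.toFun x = 0 → x = 0

end Adjointable

variable (A)

/-- The graph of the projection onto a submodule `G` (with domain `G ⊕ G^⊥`). -/
def projSet [Zero A] [Inner A E] (G : Set E) : Set (E × E) :=
  {p | ∃ x ∈ G, ∃ y ∈ ortho A G, p = (x + y, x)}

/-- The restriction of a graph to those points whose first component lies in `D`. -/
def restrictSet (g : Set (E × F)) (D : Set E) : Set (E × F) := {p ∈ g | p.1 ∈ D}

end Operators

end CStarReg

/-- The December 2024 Mathlib `CStarModule` (right Hilbert C*-modules, `SMul Aᵐᵒᵖ E`),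
restored with its old meaning since Mathlib's class now describes left modules. -/
class RightCStarModule (A : outParam <| Type*) (E : Type*) [NonUnitalSemiring A] [StarRing A]
    [Module ℂ A] [AddCommGroup E] [Module ℂ E] [PartialOrder A] [SMul Aᵐᵒᵖ E] [Norm A] [Norm E]
    extends Inner A E where
  inner_add_right {x} {y} {z} : inner x (y + z) = inner x y + inner x z
  inner_self_nonneg {x} : 0 ≤ inner x x
  inner_self {x} : inner x x = 0 ↔ x = 0
  inner_op_smul_right {a : A} {x y : E} : inner x (y <• a) = inner x y * a
  inner_smul_right_complex {z : ℂ} {x} {y} : inner x (z • y) = z • inner x y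
  star_inner x y : star (inner x y) = inner y x
  norm_eq_sqrt_norm_inner_self x : ‖x‖ = √‖inner x x‖


/-!
From `b* a_* = a* b_*` one gets `⟪b x, a_* y⟫ = ⟪a x, b_* y⟫`: the pairs `(b_* y, -a_* y)` are
orthogonal to `Graph(t)` and the pairs `(b x, -a x)` to `Graph(t')`. With the injectivity of `a*`
and `a_**`, this alone gives that `t`, `t'` are well defined, essentially defined and orthogonally
closable, and that `t ⊆ t'*`, `t' ⊆ t*`.

For the second half, consider the matrix `N = [[a, b_*], [b, -a_*]] : G ⊕ H → E ⊕ F`. Its range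
`Graph(t) + {(b_* y, -a_* y)}` is a sum of two orthogonal closed submodules, hence closed, and
`a b* = b_* a_**` makes `N*` injective. An adjointable operator with closed range and injective
adjoint is onto, so `E ⊕ F = Graph(t) ⊕ {(b_* y, -a_* y)}`; this decomposition gives
`Graph(t)^⊥ = {(b_* y, -a_* y)}`, hence `t* = t'` and the graph regularity of `t`.
-/

open scoped InnerProductSpace

namespace RightCStarModule

open MulOpposite

variable {A : Type*} [NonUnitalCStarAlgebra A] [PartialOrder A]
variable {E : Type*} [AddCommGroup E] [Module ℂ E] [SMul Aᵐᵒᵖ E] [Norm E] [RightCStarModule A E]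

/-- Mathlib's Hilbert C⋆-modules are left modules; a right Hilbert `A`-module is a left Hilbert
`Aᵐᵒᵖ`-module. -/
instance toCStarModuleMop : CStarModule Aᵐᵒᵖ E where
  inner x y := op ⟪x, y⟫_A
  inner_add_right := congrArg op inner_add_right
  inner_self_nonneg := op_nonneg.mpr inner_self_nonneg
  inner_self := op_eq_zero_iff _ |>.trans inner_self
  inner_op_smul_right {a _ _} := congrArg op (inner_op_smul_right (a := a.unop))
  inner_smul_right_complex := congrArg op inner_smul_right_complex
  star_inner x y := congrArg op (star_inner x y)
  norm_eq_sqrt_norm_inner_self x := norm_eq_sqrt_norm_inner_self x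

lemma inner_add_left {x y z : E} : ⟪x + y, z⟫_A = ⟪x, z⟫_A + ⟪y, z⟫_A :=
  op_injective (CStarModule.inner_add_left (A := Aᵐᵒᵖ) (x := x) (y := y) (z := z))

lemma inner_neg_left {x y : E} : ⟪-x, y⟫_A = -⟪x, y⟫_A :=
  op_injective (CStarModule.inner_neg_left (A := Aᵐᵒᵖ) (x := x) (y := y))

lemma inner_neg_right {x y : E} : ⟪x, -y⟫_A = -⟪x, y⟫_A :=
  op_injective (CStarModule.inner_neg_right (A := Aᵐᵒᵖ) (x := x) (y := y))

lemma inner_zero_left {x : E} : ⟪0, x⟫_A = 0 :=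
  op_injective (CStarModule.inner_zero_left (A := Aᵐᵒᵖ) (x := x))

lemma inner_smul_left_complex {z : ℂ} {x y : E} : ⟪z • x, y⟫_A = star z • ⟪x, y⟫_A :=
  op_injective (CStarModule.inner_smul_left_complex (A := Aᵐᵒᵖ) (z := z) (x := x) (y := y))

lemma inner_op_smul_left {a : A} {x y : E} : ⟪x <• a, y⟫_A = star a * ⟪x, y⟫_A :=
  op_injective (CStarModule.inner_op_smul_left (A := Aᵐᵒᵖ) (a := op a) (x := x) (y := y))

end RightCStarModule

namespace CStarModule

variable {B : Type*} [NonUnitalCStarAlgebra B] [PartialOrder B]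

section Algebraic

variable {X : Type*} [AddCommGroup X] [Module ℂ X] [SMul B X] [Norm X] [CStarModule B X]

lemma ext_inner_left {x y : X} (h : ∀ z, ⟪x, z⟫_B = ⟪y, z⟫_B) : x = y :=
  sub_eq_zero.mp <| (inner_self (A := B)).mp <| by rw [inner_sub_left, h, sub_self]

variable [StarOrderedRing B]

lemma norm_le_norm_of_inner_self_le {x y : X} (h : ⟪x, x⟫_B ≤ ⟪y, y⟫_B) : ‖x‖ ≤ ‖y‖ := by
  rw [← sq_le_sq₀ (CStarModule.norm_nonneg (A := B)) (CStarModule.norm_nonneg (A := B)),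
    norm_sq_eq B, norm_sq_eq B]
  exact CStarAlgebra.norm_le_norm_of_nonneg_of_le inner_self_nonneg h

lemma norm_le_norm_add_of_inner_eq_zero {x y : X} (h : ⟪x, y⟫_B = 0) : ‖x‖ ≤ ‖x + y‖ := by
  refine norm_le_norm_of_inner_self_le (B := B) ?_
  have h' : ⟪y, x⟫_B = 0 := by rw [← star_inner, h, star_zero]
  rw [inner_add_left, inner_add_right, inner_add_right, h, h', zero_add, add_zero]
  exact le_add_of_nonneg_right inner_self_nonneg

lemma norm_le_norm_add_I_smul {x y : X} (h : ⟪x, y⟫_B = ⟪y, x⟫_B) (t : ℝ) :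
    ‖y‖ ≤ ‖y + ((t : ℂ) * Complex.I) • x‖ := by
  refine norm_le_norm_of_inner_self_le (B := B) ?_
  have hstar : star ((t : ℂ) * Complex.I) = -((t : ℂ) * Complex.I) := by simp
  have hsq : (t : ℂ) * Complex.I * -((t : ℂ) * Complex.I) = ((t ^ 2 : ℝ) : ℂ) := by
    push_cast; ring_nf; simp
  have hexpand : ⟪y + ((t : ℂ) * Complex.I) • x, y + ((t : ℂ) * Complex.I) • x⟫_B
      = ⟪y, y⟫_B + (t ^ 2 : ℝ) • ⟪x, x⟫_B := by
    simp only [inner_add_left, inner_add_right, inner_smul_left_complex, inner_smul_right_complex,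
      h, hstar, smul_add, smul_smul]
    rw [hsq, neg_smul, RCLike.real_smul_eq_coe_smul (K := ℂ)]
    abel
  rw [hexpand]
  exact le_add_of_nonneg_right (smul_nonneg (sq_nonneg t) inner_self_nonneg)

end Algebraic

variable [StarOrderedRing B]
variable {X : Type*} [NormedAddCommGroup X] [NormedSpace ℂ X] [SMul B X] [CStarModule B X]

theorem isClosed_add_of_inner_eq_zero [CompleteSpace X] {S T : Submodule ℂ X}
    (hS : IsClosed (S : Set X)) (hT : IsClosed (T : Set X))
    (horth : ∀ x ∈ S, ∀ y ∈ T, ⟪x, y⟫_B = 0) : IsClosed ((S : Set X) + (T : Set X)) := by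
  have := hS.completeSpace_coe
  have := hT.completeSpace_coe
  let f : S × T →L[ℂ] X := S.subtypeL.coprod T.subtypeL
  have hf : AntilipschitzWith 1 f := f.antilipschitz_of_bound fun p => by
    rw [NNReal.coe_one, one_mul, Prod.norm_def]
    have h := horth _ p.1.2 _ p.2.2
    refine max_le (norm_le_norm_add_of_inner_eq_zero h) ?_
    have h' : ⟪(p.2 : X), p.1⟫_B = 0 := by rw [← star_inner, h, star_zero]
    exact (norm_le_norm_add_of_inner_eq_zero h').trans_eq (by rw [add_comm]; rfl)
  have hrange : Set.range f = (S : Set X) + (T : Set X) := by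
    ext x
    simp [Set.mem_add, f]
  rw [← hrange]
  exact hf.isClosed_range f.uniformContinuous

end CStarModule

namespace ContinuousLinearMap

theorem isUnit_add_of_norm_lt {𝕜 V : Type*} [NontriviallyNormedField 𝕜] [NormedAddCommGroup V]
    [NormedSpace 𝕜 V] [CompleteSpace V] {v : V →L[𝕜] V} (hv : IsUnit v) {c : ℝ} (hc : 0 < c)
    (hbelow : ∀ x, c * ‖x‖ ≤ ‖v x‖) {w : V →L[𝕜] V} (hw : ‖w‖ < c) : IsUnit (v + w) := by
  nontriviality V →L[𝕜] V
  obtain ⟨u, rfl⟩ := hv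
  have hinv : ‖(↑u⁻¹ : V →L[𝕜] V)‖ ≤ c⁻¹ := by
    refine opNorm_le_bound _ (by positivity) fun y => ?_
    have h := hbelow ((↑u⁻¹ : V →L[𝕜] V) y)
    have hy : (↑u : V →L[𝕜] V) ((↑u⁻¹ : V →L[𝕜] V) y) = y :=
      congrArg (fun f : V →L[𝕜] V => f y) u.mul_inv
    rwa [hy, ← le_div_iff₀' hc, div_eq_inv_mul] at h
  refine (u.add w (hw.trans_le ?_)).isUnit
  exact (le_inv_comm₀ hc (Units.norm_pos u⁻¹)).mpr hinv

/-- The set of `t` for which `s + i t` is invertible is open and closed by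
`isUnit_add_of_norm_lt`, and it contains every `t > ‖s‖`. -/
theorem isUnit_of_forall_le_norm_add_I_smul {V : Type*} [NormedAddCommGroup V] [NormedSpace ℂ V]
    [CompleteSpace V] (s : V →L[ℂ] V) {c : ℝ} (hc : 0 < c)
    (h : ∀ (t : ℝ) (x : V), c * ‖x‖ ≤ ‖s x + ((t : ℂ) * Complex.I) • x‖) : IsUnit s := by
  have hone : ‖(1 : V →L[ℂ] V)‖ ≤ 1 := opNorm_le_bound _ zero_le_one fun x => by simp
  set u : ℝ → V →L[ℂ] V := fun t => s + ((t : ℂ) * Complex.I) • 1 with hu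
  have step : ∀ t t', IsUnit (u t) → |t' - t| < c → IsUnit (u t') := by
    intro t t' ht htt'
    have hnorm : ‖(((t' - t : ℝ) : ℂ) * Complex.I) • (1 : V →L[ℂ] V)‖ < c := by
      refine ((norm_smul_le _ _).trans (mul_le_of_le_one_right (norm_nonneg _) hone)).trans_lt ?_
      rwa [norm_mul, Complex.norm_I, mul_one, Complex.norm_real, Real.norm_eq_abs]
    convert isUnit_add_of_norm_lt ht hc (h t) hnorm using 1
    simp only [hu]; push_cast; rw [add_assoc, ← add_smul]; ring_nf
  have hbig : IsUnit (u (‖s‖ + 1)) := by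
    have hz : ((‖s‖ + 1 : ℝ) : ℂ) * Complex.I ≠ 0 := by
      simp only [ne_eq, mul_eq_zero, Complex.ofReal_eq_zero, Complex.I_ne_zero, or_false]
      positivity
    have hunit := (isUnit_iff_ne_zero.mpr hz).map (algebraMap ℂ (V →L[ℂ] V))
    rw [Algebra.algebraMap_eq_smul_one] at hunit
    show IsUnit (s + _)
    rw [add_comm s]
    refine isUnit_add_of_norm_lt hunit (c := ‖s‖ + 1) (by positivity) (fun x => ?_) (lt_add_one _)
    rw [smul_apply, one_apply_eq_self, norm_smul, norm_mul, Complex.norm_I, mul_one,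
      Complex.norm_real, Real.norm_of_nonneg (by positivity)]
  have hU : IsClopen {t | IsUnit (u t)} := by
    constructor
    · refine isOpen_compl_iff.mp (Metric.isOpen_iff.mpr fun t ht => ⟨c, hc, fun t' ht' ht'U => ?_⟩)
      exact ht (step t' t ht'U (by rwa [abs_sub_comm, ← Real.dist_eq]))
    · exact Metric.isOpen_iff.mpr fun t ht => ⟨c, hc, fun t' ht' => step t t' ht (by
        rwa [← Real.dist_eq])⟩
  have huniv := (isClopen_iff.mp hU).resolve_left (Set.nonempty_iff_ne_empty.mp ⟨_, hbig⟩)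
  have h0 : (0 : ℝ) ∈ {t | IsUnit (u t)} := huniv ▸ Set.mem_univ 0
  simpa [hu] using h0

end ContinuousLinearMap

namespace CStarReg.Adjointable

open CStarModule (ext_inner_left inner_self)
open WithCStarModule (equiv prod_inner)

variable {B : Type*} [NonUnitalCStarAlgebra B] [PartialOrder B]

section Algebraic

variable {X Y : Type*} [AddCommGroup X] [Module ℂ X] [SMul B X] [Norm X] [CStarModule B X]
  [AddCommGroup Y] [Module ℂ Y] [SMul B Y] [Norm Y] [CStarModule B Y]
variable (T : Adjointable B X Y)

lemma map_add (x x' : X) : T.toFun (x + x') = T.toFun x + T.toFun x' :=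
  ext_inner_left (B := B) fun z => by simp only [T.adjoint_eq, CStarModule.inner_add_left]

lemma map_smul (c : ℂ) (x : X) : T.toFun (c • x) = c • T.toFun x :=
  ext_inner_left (B := B) fun z => by simp only [T.adjoint_eq, CStarModule.inner_smul_left_complex]

lemma map_smul_coeff (b : B) (x : X) : T.toFun (b • x) = b • T.toFun x :=
  ext_inner_left (B := B) fun z => by simp only [T.adjoint_eq, CStarModule.inner_op_smul_left]

def toLinearMap : X →ₗ[ℂ] Y where
  toFun := T.toFun
  map_add' := T.map_add
  map_smul' := T.map_smul

def adjoint : Adjointable B Y X where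
  toFun := T.adjFun
  adjFun := T.toFun
  adjoint_eq y x := by rw [← CStarModule.star_inner, ← T.adjoint_eq, CStarModule.star_inner]

lemma adjFun_eq_zero_of_toFun_adjFun_eq_zero {y : Y} (h : T.toFun (T.adjFun y) = 0) :
    T.adjFun y = 0 :=
  (inner_self (A := B)).mp <| by rw [← T.adjoint_eq, h, CStarModule.inner_zero_left]

end Algebraic

variable [StarOrderedRing B]

section Matrices

variable {X Y Y₁ Y₂ : Type*}
  [NormedAddCommGroup X] [Module ℂ X] [SMul B X] [CStarModule B X]
  [NormedAddCommGroup Y] [Module ℂ Y] [SMul B Y] [CStarModule B Y]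
  [NormedAddCommGroup Y₁] [Module ℂ Y₁] [SMul B Y₁] [CStarModule B Y₁]
  [NormedAddCommGroup Y₂] [Module ℂ Y₂] [SMul B Y₂] [CStarModule B Y₂]

protected def neg (T : Adjointable B X Y) : Adjointable B X Y where
  toFun x := -T.toFun x
  adjFun y := -T.adjFun y
  adjoint_eq x y := by
    rw [CStarModule.inner_neg_left, CStarModule.inner_neg_right, T.adjoint_eq]

def col (S : Adjointable B X Y₁) (T : Adjointable B X Y₂) :
    Adjointable B X (WithCStarModule B (Y₁ × Y₂)) where
  toFun x := (equiv B (Y₁ × Y₂)).symm (S.toFun x, T.toFun x)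
  adjFun y := S.adjFun y.1 + T.adjFun y.2
  adjoint_eq x y := by
    rw [prod_inner, CStarModule.inner_add_right]
    exact congrArg₂ (· + ·) (S.adjoint_eq x y.1) (T.adjoint_eq x y.2)

def row (S : Adjointable B Y₁ Y) (T : Adjointable B Y₂ Y) :
    Adjointable B (WithCStarModule B (Y₁ × Y₂)) Y where
  toFun x := S.toFun x.1 + T.toFun x.2
  adjFun y := (equiv B (Y₁ × Y₂)).symm (S.adjFun y, T.adjFun y)
  adjoint_eq x y := by
    rw [prod_inner, CStarModule.inner_add_left]
    exact congrArg₂ (· + ·) (S.adjoint_eq x.1 y) (T.adjoint_eq x.2 y)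

lemma range_row (S : Adjointable B Y₁ Y) (T : Adjointable B Y₂ Y) :
    Set.range (row S T).toFun = Set.range S.toFun + Set.range T.toFun := by
  ext y
  simp only [Set.mem_add, Set.mem_range]
  constructor
  · rintro ⟨x, rfl⟩
    exact ⟨_, ⟨x.1, rfl⟩, _, ⟨x.2, rfl⟩, rfl⟩
  · rintro ⟨_, ⟨x₁, rfl⟩, _, ⟨x₂, rfl⟩, rfl⟩
    exact ⟨(equiv B (Y₁ × Y₂)).symm (x₁, x₂), rfl⟩

end Matrices

section ClosedRange

variable {X Y : Type*}
  [NormedAddCommGroup X] [NormedSpace ℂ X] [SMul B X] [CStarModule B X]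
  [NormedAddCommGroup Y] [NormedSpace ℂ Y] [SMul B Y] [CStarModule B Y]
variable (T : Adjointable B X Y)

lemma norm_le_sq_mul_norm_toFun_adjFun {C : ℝ} {x : X} {y : Y} (hxy : T.toFun x = y)
    (hx : ‖x‖ ≤ C * ‖y‖) : ‖y‖ ≤ C ^ 2 * ‖T.toFun (T.adjFun y)‖ := by
  have h₁ : ‖y‖ ^ 2 ≤ C * ‖y‖ * ‖T.adjFun y‖ :=
    calc ‖y‖ ^ 2 = ‖⟪x, T.adjFun y⟫_B‖ := by rw [CStarModule.norm_sq_eq B, ← T.adjoint_eq, hxy]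
      _ ≤ ‖x‖ * ‖T.adjFun y‖ := CStarModule.norm_inner_le X
      _ ≤ C * ‖y‖ * ‖T.adjFun y‖ := by gcongr
  have h₂ : ‖T.adjFun y‖ ^ 2 ≤ ‖T.toFun (T.adjFun y)‖ * ‖y‖ :=
    calc ‖T.adjFun y‖ ^ 2 = ‖⟪T.toFun (T.adjFun y), y⟫_B‖ := by
          rw [CStarModule.norm_sq_eq B, T.adjoint_eq]
      _ ≤ ‖T.toFun (T.adjFun y)‖ * ‖y‖ := CStarModule.norm_inner_le Y
  rcases (norm_nonneg y).eq_or_lt with hy | hy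
  · rw [← hy]; positivity
  · have h₃ : ‖y‖ ≤ C * ‖T.adjFun y‖ := le_of_mul_le_mul_right (by nlinarith) hy
    exact le_of_mul_le_mul_right (by nlinarith) hy

variable [CompleteSpace X] [CompleteSpace Y]

theorem continuous_toFun : Continuous T.toFun := by
  refine T.toLinearMap.continuous_of_seq_closed_graph fun u x y hu hTu => ?_
  refine ext_inner_left (B := B) fun z => tendsto_nhds_unique
    ((CStarModule.continuous_inner.tendsto _).comp (hTu.prodMk_nhds tendsto_const_nhds)) ?_
  simp only [Function.comp_def, toLinearMap, LinearMap.coe_mk, AddHom.coe_mk, T.adjoint_eq]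
  exact (CStarModule.continuous_inner.tendsto _).comp (hu.prodMk_nhds tendsto_const_nhds)

def toCLM : X →L[ℂ] Y := ⟨T.toLinearMap, T.continuous_toFun⟩

/-- By the open mapping theorem `T T*` is bounded below on the range `R` of `T`; being
self-adjoint, it is then invertible on `R`, and `T T* (y - z) = 0` for some `z ∈ R` forces
`y = z`. -/
theorem surjective_of_isClosed_range (hT : IsClosed (Set.range T.toFun))
    (hker : ∀ y, T.adjFun y = 0 → y = 0) : Function.Surjective T.toFun := by
  set R := LinearMap.range (T.toCLM : X →ₗ[ℂ] Y)
  have hR : (R : Set Y) = Set.range T.toFun := LinearMap.coe_range _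
  have : CompleteSpace R := (hR ▸ hT).completeSpace_coe
  obtain ⟨C, hC, hpre⟩ := T.toCLM.rangeRestrict.exists_preimage_norm_le (by
    rintro ⟨_, x, rfl⟩
    exact ⟨x, rfl⟩)
  have hmem : ∀ y, T.toFun (T.adjFun y) ∈ R := fun y => ⟨_, rfl⟩
  let s : R →L[ℂ] R := (T.toCLM ∘L T.adjoint.toCLM ∘L R.subtypeL).codRestrict R fun r => hmem r
  have hs : IsUnit s := by
    refine ContinuousLinearMap.isUnit_of_forall_le_norm_add_I_smul s (c := (C ^ 2)⁻¹)
      (by positivity) fun t r => ?_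
    obtain ⟨x, hx, hxC⟩ := hpre r
    have hsym : ⟪(r : Y), T.toFun (T.adjFun r)⟫_B = ⟪T.toFun (T.adjFun r), r⟫_B :=
      (T.adjoint.adjoint_eq r (T.adjFun r)).symm.trans (T.adjoint_eq _ _).symm
    rw [inv_mul_le_iff₀ (by positivity)]
    exact (T.norm_le_sq_mul_norm_toFun_adjFun (congrArg Subtype.val hx) hxC).trans
      (by gcongr; exact CStarModule.norm_le_norm_add_I_smul hsym t)
  intro y
  obtain ⟨z, hz⟩ := (ContinuousLinearMap.isUnit_iff_bijective.mp hs).2 ⟨_, hmem y⟩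
  obtain ⟨x, hx⟩ := z.2
  refine ⟨x, hx.trans (sub_eq_zero.mp (hker _ ?_)).symm⟩
  refine T.adjFun_eq_zero_of_toFun_adjFun_eq_zero ?_
  exact (map_sub (T.toCLM ∘L T.adjoint.toCLM) y z).trans
    (sub_eq_zero.mpr (congrArg Subtype.val hz).symm)

end ClosedRange

section RowRange

variable {Y Y₁ Y₂ : Type*}
  [NormedAddCommGroup Y] [NormedSpace ℂ Y] [SMul B Y] [CStarModule B Y] [CompleteSpace Y]
  [NormedAddCommGroup Y₁] [Module ℂ Y₁] [SMul B Y₁] [CStarModule B Y₁]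
  [NormedAddCommGroup Y₂] [Module ℂ Y₂] [SMul B Y₂] [CStarModule B Y₂]

theorem isClosed_range_row (S : Adjointable B Y₁ Y)
    (T : Adjointable B Y₂ Y) (hS : IsClosed (Set.range S.toFun))
    (hT : IsClosed (Set.range T.toFun)) (horth : ∀ x₁ x₂, ⟪S.toFun x₁, T.toFun x₂⟫_B = 0) :
    IsClosed (Set.range (row S T).toFun) := by
  have h := CStarModule.isClosed_add_of_inner_eq_zero (S := LinearMap.range S.toLinearMap)
    (T := LinearMap.range T.toLinearMap) (by rwa [LinearMap.coe_range])
    (by rwa [LinearMap.coe_range]) (by rintro _ ⟨x₁, rfl⟩ _ ⟨x₂, rfl⟩; exact horth x₁ x₂)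
  rw [LinearMap.coe_range, LinearMap.coe_range] at h
  rwa [range_row]

end RowRange

end CStarReg.Adjointable

namespace CStarReg

open MulOpposite

variable {A : Type*} [NonUnitalCStarAlgebra A] [PartialOrder A]

/-- The graph of the quotient operator `g f⁻¹`. -/
def pairGraph {X E F : Type*} (f : X → E) (g : X → F) : Set (E × F) := {p | ∃ x, p = (f x, g x)}

lemma image_fst_pairGraph {X E F : Type*} (f : X → E) (g : X → F) :
    Prod.fst '' pairGraph f g = Set.range f := by
  ext e
  constructor
  · rintro ⟨_, ⟨x, rfl⟩, rfl⟩
    exact ⟨x, rfl⟩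
  · rintro ⟨x, rfl⟩
    exact ⟨_, ⟨x, rfl⟩, rfl⟩

section Algebraic

variable {E F G H : Type*}
  [AddCommGroup E] [Module ℂ E] [SMul Aᵐᵒᵖ E] [Norm E] [RightCStarModule A E]
  [AddCommGroup F] [Module ℂ F] [SMul Aᵐᵒᵖ F] [Norm F] [RightCStarModule A F]
  [AddCommGroup G] [Module ℂ G] [SMul Aᵐᵒᵖ G] [Norm G] [RightCStarModule A G]
  [AddCommGroup H] [Module ℂ H] [SMul Aᵐᵒᵖ H] [Norm H] [RightCStarModule A H]

namespace Adjointable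

def mop (T : Adjointable A E F) : Adjointable Aᵐᵒᵖ E F where
  toFun := T.toFun
  adjFun := T.adjFun
  adjoint_eq x y := congrArg op (T.adjoint_eq x y)

lemma inner_adjFun_left (T : Adjointable A E F) (y : F) (x : E) :
    ⟪T.adjFun y, x⟫_A = ⟪y, T.toFun x⟫_A := by
  rw [← RightCStarModule.star_inner, ← T.adjoint_eq, RightCStarModule.star_inner]

lemma eq_zero_of_forall_inner_toFun_eq_zero (T : Adjointable A E F)
    (hT : ∀ y, T.adjFun y = 0 → y = 0) {y : F} (h : ∀ x, ⟪y, T.toFun x⟫_A = 0) : y = 0 :=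
  hT y <| RightCStarModule.inner_self.mp <| by rw [T.inner_adjFun_left, h]

lemma isEssential_range (T : Adjointable A E F) (hT : ∀ y, T.adjFun y = 0 → y = 0) :
    IsEssential A (Set.range T.toFun) :=
  Set.eq_singleton_iff_unique_mem.mpr ⟨fun _ _ => RightCStarModule.inner_zero_left,
    fun _ hy => T.eq_zero_of_forall_inner_toFun_eq_zero hT fun x => hy _ ⟨x, rfl⟩⟩

lemma isEssential_image_fst_pairGraph {Y : Type*} (T : Adjointable A G E) (g : G → Y)
    (hT : ∀ y, T.adjFun y = 0 → y = 0) : IsEssential A (Prod.fst '' pairGraph T.toFun g) :=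
  image_fst_pairGraph T.toFun g ▸ T.isEssential_range hT

lemma inner_toFun_eq_of_adjFun_comp_eq (a : Adjointable A G E) (b : Adjointable A G F)
    (astar : Adjointable A H F) (bstar : Adjointable A H E)
    (hrel : ∀ y, b.adjFun (astar.toFun y) = a.adjFun (bstar.toFun y)) (x : G) (y : H) :
    ⟪b.toFun x, astar.toFun y⟫_A = ⟪a.toFun x, bstar.toFun y⟫_A := by
  rw [b.adjoint_eq, hrel, ← a.adjoint_eq]

/-- The cross terms cancel because `a b* = b_* a_**` gives `⟪a* e, b* f⟫ = ⟪b_** e, a_** f⟫`. -/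
lemma eq_zero_of_adjFun_add_eq_zero [StarOrderedRing A] (a : Adjointable A G E)
    (b : Adjointable A G F) (astar : Adjointable A H F) (bstar : Adjointable A H E)
    (hrel : ∀ y, a.toFun (b.adjFun y) = bstar.toFun (astar.adjFun y))
    (hka : ∀ z, a.adjFun z = 0 → z = 0) (hkas : ∀ z, astar.adjFun z = 0 → z = 0) {e : E} {f : F}
    (h₁ : a.adjFun e + b.adjFun f = 0) (h₂ : bstar.adjFun e = astar.adjFun f) : e = 0 ∧ f = 0 := by
  have hcross : ⟪a.adjFun e, b.adjFun f⟫_A = ⟪bstar.adjFun e, astar.adjFun f⟫_A := by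
    rw [a.inner_adjFun_left, hrel, bstar.inner_adjFun_left]
  have hsum : ⟪a.adjFun e, a.adjFun e⟫_A + ⟪astar.adjFun f, astar.adjFun f⟫_A = 0 := by
    nth_rewrite 2 [eq_neg_of_add_eq_zero_left h₁]
    rw [RightCStarModule.inner_neg_right, hcross, h₂, neg_add_cancel]
  obtain ⟨he, hf⟩ := (add_eq_zero_iff_of_nonneg RightCStarModule.inner_self_nonneg
    RightCStarModule.inner_self_nonneg).mp hsum
  exact ⟨hka e (RightCStarModule.inner_self.mp he), hkas f (RightCStarModule.inner_self.mp hf)⟩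

end Adjointable

lemma inner_prod_def (p q : E × F) : ⟪p, q⟫_A = ⟪p.1, q.1⟫_A + ⟪p.2, q.2⟫_A := rfl

lemma star_inner_prod (p q : E × F) : star ⟪p, q⟫_A = ⟪q, p⟫_A := by
  simp only [inner_prod_def, star_add, RightCStarModule.star_inner]

lemma inner_prod_add_left (p q r : E × F) : ⟪p + q, r⟫_A = ⟪p, r⟫_A + ⟪q, r⟫_A := by
  simp only [inner_prod_def, Prod.fst_add, Prod.snd_add, RightCStarModule.inner_add_left]
  abel

lemma eq_zero_of_inner_prod_self_eq_zero [StarOrderedRing A] {p : E × F} (h : ⟪p, p⟫_A = 0) :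
    p = 0 := by
  obtain ⟨h₁, h₂⟩ := (add_eq_zero_iff_of_nonneg RightCStarModule.inner_self_nonneg
    RightCStarModule.inner_self_nonneg).mp h
  exact Prod.ext (RightCStarModule.inner_self.mp h₁) (RightCStarModule.inner_self.mp h₂)

lemma subset_ortho_comm {S T : Set (E × F)} : T ⊆ ortho A S ↔ S ⊆ ortho A T := by
  constructor <;> intro h p hp q hq <;> rw [← star_inner_prod, h hq p hp, star_zero]

lemma ortho_eq_of_add_eq_univ [StarOrderedRing A] {S T : Set (E × F)} (hT : T ⊆ ortho A S)
    (hsum : S + T = Set.univ) : ortho A S = T := by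
  refine subset_antisymm (fun w hw => ?_) hT
  obtain ⟨p, hp, q, hq, rfl⟩ := Set.mem_add.mp (hsum ▸ Set.mem_univ w : w ∈ S + T)
  have hp0 : p = 0 := eq_zero_of_inner_prod_self_eq_zero <| by
    have h := hw p hp
    rwa [inner_prod_add_left, hT hq p hp, add_zero] at h
  rwa [hp0, zero_add]

lemma mem_adjSet_iff {g : Set (E × F)} {q : F × E} : q ∈ adjSet A g ↔ (q.2, -q.1) ∈ ortho A g := by
  refine forall₂_congr fun p _ => ?_
  rw [inner_prod_def, RightCStarModule.inner_neg_left, ← sub_eq_add_neg, sub_eq_zero,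
    ← RightCStarModule.star_inner q.2, ← RightCStarModule.star_inner q.1, star_inj, eq_comm]

lemma adjSet_anti {g g' : Set (E × F)} (h : g ⊆ g') : adjSet A g' ⊆ adjSet A g :=
  fun _ hq p hp => hq p (h hp)

lemma pairGraph_subset_adjSet {X : Type*} {f : X → E} {g : X → F} {g' : Set (F × E)}
    (h : ∀ x, (g x, -f x) ∈ ortho A g') : pairGraph f g ⊆ adjSet A g' := by
  rintro _ ⟨x, rfl⟩
  exact mem_adjSet_iff.mpr (h x)

lemma adjSet_eq_pairGraph_of_ortho_eq {X : Type*} {g : Set (E × F)} (u : X → F) (v : X → E)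
    (h : ortho A g = pairGraph v fun x => -u x) : adjSet A g = pairGraph u v := by
  ext ⟨y, z⟩
  rw [mem_adjSet_iff, h]
  constructor
  · rintro ⟨x, hx⟩
    obtain ⟨h₁, h₂⟩ := Prod.mk.inj hx
    exact ⟨x, Prod.ext (neg_inj.mp h₂) h₁⟩
  · rintro ⟨x, hx⟩
    obtain ⟨rfl, rfl⟩ := Prod.mk.inj hx
    exact ⟨x, rfl⟩

section Quotients

variable {X : Type*} {f : X → E} {g : X → F}

lemma mk_neg_mem_ortho_pairGraph {Y : Type*} {u : Y → F} {v : Y → E}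
    (h : ∀ x y, ⟪g x, u y⟫_A = ⟪f x, v y⟫_A) (y : Y) :
    (v y, -u y) ∈ ortho A (pairGraph f g) := by
  rintro _ ⟨x, rfl⟩
  rw [← star_inner_prod, inner_prod_def, RightCStarModule.inner_neg_right, h, add_neg_cancel,
    star_zero]

lemma eq_zero_of_inner_eq_of_eq_zero {v : H → E} (u : Adjointable A H F)
    (hu : ∀ z, u.adjFun z = 0 → z = 0)
    (h : ∀ x y, ⟪g x, u.toFun y⟫_A = ⟪f x, v y⟫_A) {x : X} (hx : f x = 0) : g x = 0 :=
  u.eq_zero_of_forall_inner_toFun_eq_zero hu fun y => by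
    rw [h, hx, RightCStarModule.inner_zero_left]

lemma eq_zero_of_mem_ortho_ortho {S : Set (E × F)} {v : H → E} (u : Adjointable A H F)
    (hu : ∀ z, u.adjFun z = 0 → z = 0) (hperp : ∀ y, (v y, -u.toFun y) ∈ ortho A S) {z : F}
    (hz : ((0 : E), z) ∈ ortho A (ortho A S)) : z = 0 :=
  u.eq_zero_of_forall_inner_toFun_eq_zero hu fun y => by
    have h := hz _ (hperp y)
    rwa [inner_prod_def, RightCStarModule.inner_zero_left, zero_add,
      RightCStarModule.inner_neg_right, neg_eq_zero] at h

end Quotients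

namespace Unbounded

def ofOrtho (S : Set (E × F)) (h : ∀ y : F, ((0 : E), y) ∈ ortho A S → y = 0) :
    Unbounded A E F where
  graph := ortho A S
  zero_mem q _ := by
    simp only [inner_prod_def, RightCStarModule.inner_zero_left, add_zero]
  add_mem p p' hp hp' q hq := by rw [inner_prod_add_left, hp q hq, hp' q hq, add_zero]
  smul_mem c p hp q hq := by
    have h := hp q hq
    simp only [inner_prod_def, Prod.smul_fst, Prod.smul_snd,
      RightCStarModule.inner_smul_left_complex, ← smul_add] at h ⊢
    rw [h, smul_zero]
  smulA_mem m p hp q hq := by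
    have h := hp q hq
    simp only [inner_prod_def, RightCStarModule.inner_op_smul_left, ← mul_add] at h ⊢
    rw [h, mul_zero]
  single_valued := h

def ofQuotient (a : Adjointable A G E) (b : Adjointable A G F)
    (h : ∀ x, a.toFun x = 0 → b.toFun x = 0) : Unbounded A E F where
  graph := pairGraph a.toFun b.toFun
  zero_mem := ⟨0, Prod.ext (map_zero a.mop.toLinearMap).symm (map_zero b.mop.toLinearMap).symm⟩
  add_mem := by
    rintro _ _ ⟨x, rfl⟩ ⟨x', rfl⟩
    exact ⟨x + x', Prod.ext (a.mop.map_add x x').symm (b.mop.map_add x x').symm⟩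
  smul_mem := by
    rintro c _ ⟨x, rfl⟩
    exact ⟨c • x, Prod.ext (a.mop.map_smul c x).symm (b.mop.map_smul c x).symm⟩
  smulA_mem := by
    rintro m _ ⟨x, rfl⟩
    exact ⟨x <• m, Prod.ext (a.mop.map_smul_coeff (op m) x).symm
      (b.mop.map_smul_coeff (op m) x).symm⟩
  single_valued := by
    rintro y ⟨x, hx⟩
    obtain ⟨ha, rfl⟩ := Prod.mk.inj hx
    exact h x ha.symm

lemma graphRegular_of_add_eq_univ [StarOrderedRing A] (u : Unbounded A E F)
    (hu : u.EssentiallyDefined) {T : Set (E × F)} (hT : T ⊆ ortho A u.graph)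
    (hsum : u.graph + T = Set.univ) : u.GraphRegular := by
  have hortho := ortho_eq_of_add_eq_univ hT hsum
  refine ⟨hu, ?_, by rwa [hortho]⟩
  rw [OrthoClosed, hortho]
  exact ortho_eq_of_add_eq_univ (subset_ortho_comm.mp hT) ((add_comm _ _).trans hsum)

end Unbounded

end Algebraic

end CStarReg

namespace CStarReg.Adjointable

open MulOpposite

variable {A : Type*} [NonUnitalCStarAlgebra A] [PartialOrder A] [StarOrderedRing A]
variable {E F G H : Type*}
  [NormedAddCommGroup E] [Module ℂ E] [SMul Aᵐᵒᵖ E] [RightCStarModule A E]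
  [NormedAddCommGroup F] [Module ℂ F] [SMul Aᵐᵒᵖ F] [RightCStarModule A F]
  [NormedAddCommGroup G] [Module ℂ G] [SMul Aᵐᵒᵖ G] [RightCStarModule A G]
  [NormedAddCommGroup H] [Module ℂ H] [SMul Aᵐᵒᵖ H] [RightCStarModule A H]
variable (a : Adjointable A G E) (b : Adjointable A G F) (astar : Adjointable A H F)
  (bstar : Adjointable A H E)

/-- The matrix `[[a, b_*], [b, -a_*]] : G ⊕ H → E ⊕ F`. -/
def admissibleMatrix :
    Adjointable Aᵐᵒᵖ (WithCStarModule Aᵐᵒᵖ (G × H)) (WithCStarModule Aᵐᵒᵖ (E × F)) :=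
  row (col a.mop b.mop) (col bstar.mop astar.mop.neg)

variable [CompleteSpace E] [CompleteSpace F] [CompleteSpace G] [CompleteSpace H]

theorem admissibleMatrix_surjective
    (hrel : ∀ y, b.adjFun (astar.toFun y) = a.adjFun (bstar.toFun y))
    (hrel' : ∀ y, a.toFun (b.adjFun y) = bstar.toFun (astar.adjFun y))
    (hka : ∀ z, a.adjFun z = 0 → z = 0) (hkas : ∀ z, astar.adjFun z = 0 → z = 0)
    (hcl : IsClosed (pairGraph a.toFun b.toFun))
    (hcl' : IsClosed (pairGraph astar.toFun bstar.toFun)) :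
    Function.Surjective (admissibleMatrix a b astar bstar).toFun := by
  refine surjective_of_isClosed_range _ (isClosed_range_row _ _ ?_ ?_ fun x y => ?_) fun w hw => ?_
  · convert hcl.preimage (WithCStarModule.uniformEquiv (A := Aᵐᵒᵖ)).continuous using 1
    exact Set.ext fun p => ⟨fun ⟨x, hx⟩ => ⟨x, hx.symm⟩, fun ⟨x, hx⟩ => ⟨x, hx.symm⟩⟩
  · have hφ : Continuous fun p : WithCStarModule Aᵐᵒᵖ (E × F) => (-p.2, p.1) :=
      (continuous_snd.neg.prodMk continuous_fst).comp
        (WithCStarModule.uniformEquiv (A := Aᵐᵒᵖ)).continuous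
    convert hcl'.preimage hφ using 1
    refine Set.ext fun p => ⟨?_, ?_⟩
    · rintro ⟨y, rfl⟩
      exact ⟨y, Prod.ext (neg_neg _) rfl⟩
    · rintro ⟨y, hy⟩
      obtain ⟨h₁, h₂⟩ := Prod.mk.inj hy
      exact ⟨y, Prod.ext h₂.symm (neg_eq_iff_eq_neg.mp h₁).symm⟩
  · rw [WithCStarModule.prod_inner]
    show op ⟪a.toFun x, bstar.toFun y⟫_A + op ⟪b.toFun x, -astar.toFun y⟫_A = 0
    rw [RightCStarModule.inner_neg_right, inner_toFun_eq_of_adjFun_comp_eq a b astar bstar hrel,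
      ← op_add, add_neg_cancel, op_zero]
  · have h₁ : a.adjFun w.1 + b.adjFun w.2 = 0 := congrArg Prod.fst hw
    have h₂ : bstar.adjFun w.1 + -astar.adjFun w.2 = 0 := congrArg Prod.snd hw
    obtain ⟨he, hf⟩ := eq_zero_of_adjFun_add_eq_zero a b astar bstar hrel' hka hkas h₁
      (neg_add_eq_zero.mp (by rwa [add_comm] at h₂)).symm
    exact Prod.ext he hf

theorem pairGraph_add_pairGraph_eq_univ
    (hrel : ∀ y, b.adjFun (astar.toFun y) = a.adjFun (bstar.toFun y))
    (hrel' : ∀ y, a.toFun (b.adjFun y) = bstar.toFun (astar.adjFun y))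
    (hka : ∀ z, a.adjFun z = 0 → z = 0) (hkas : ∀ z, astar.adjFun z = 0 → z = 0)
    (hcl : IsClosed (pairGraph a.toFun b.toFun))
    (hcl' : IsClosed (pairGraph astar.toFun bstar.toFun)) :
    pairGraph a.toFun b.toFun + pairGraph bstar.toFun (fun y => -astar.toFun y) = Set.univ :=
  Set.eq_univ_of_forall fun p => by
    obtain ⟨⟨x, y⟩, hxy⟩ := admissibleMatrix_surjective a b astar bstar hrel hrel' hka hkas hcl hcl'
      ((WithCStarModule.equiv _ _).symm p)
    exact Set.mem_add.mpr ⟨_, ⟨x, rfl⟩, _, ⟨y, rfl⟩, hxy⟩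

end CStarReg.Adjointable

section Statements

open CStarReg Unbounded

variable {A : Type*} [NonUnitalCStarAlgebra A] [PartialOrder A] [StarOrderedRing A]
variable {E : Type*} [NormedAddCommGroup E] [Module ℂ E] [SMul Aᵐᵒᵖ E] [RightCStarModule A E]
  [CompleteSpace E]
variable {F : Type*} [NormedAddCommGroup F] [Module ℂ F] [SMul Aᵐᵒᵖ F] [RightCStarModule A F]
  [CompleteSpace F]
variable {G : Type*} [NormedAddCommGroup G] [Module ℂ G] [SMul Aᵐᵒᵖ G] [RightCStarModule A G]
  [CompleteSpace G]
variable {H : Type*} [NormedAddCommGroup H] [Module ℂ H] [SMul Aᵐᵒᵖ H] [RightCStarModule A H]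
  [CompleteSpace H]

/-- Admissible pairs of quotients of adjointable operators: given
`a ∈ Adj(G,E)`, `b ∈ Adj(G,F)`, `a_* ∈ Adj(H,F)`, `b_* ∈ Adj(H,E)` with `b*a_* = a*b_*`
and `Null(a*) = Null(a_**) = {0}`, the quotient operators `t = b a⁻¹` and `t' = b_* a_*⁻¹`
are well-defined, essentially defined, orthogonally closable, with `(t')** ⊆ t*` and
`t** ⊆ (t')*`; if moreover `t`, `t'` are closed and `ab* = b_* a_**`, then `t* = t'` and
`t` is graph regular. -/
theorem admissible_pair_graphRegular (a : Adjointable A G E) (b : Adjointable A G F)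
    (astar : Adjointable A H F) (bstar : Adjointable A H E)
    (hrel : ∀ y : H, b.adjFun (astar.toFun y) = a.adjFun (bstar.toFun y))
    (hka : ∀ z : E, a.adjFun z = 0 → z = 0)
    (hkas : ∀ z : F, astar.adjFun z = 0 → z = 0)
    (gt : Set (E × F)) (hgt : gt = {p : E × F | ∃ x : G, p = (a.toFun x, b.toFun x)})
    (gt' : Set (F × E))
    (hgt' : gt' = {p : F × E | ∃ y : H, p = (astar.toFun y, bstar.toFun y)}) :
    (∀ x : G, a.toFun x = 0 → b.toFun x = 0) ∧
    (∀ y : H, astar.toFun y = 0 → bstar.toFun y = 0) ∧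
    (∃ u : CStarReg.Unbounded A E F, u.graph = gt) ∧
    (∃ u' : CStarReg.Unbounded A F E, u'.graph = gt') ∧
    IsEssential A (Prod.fst '' gt) ∧ IsEssential A (Prod.fst '' gt') ∧
    (∃ s : CStarReg.Unbounded A E F, s.graph = ortho A (ortho A gt)) ∧
    (∃ s' : CStarReg.Unbounded A F E, s'.graph = ortho A (ortho A gt')) ∧
    adjSet A (adjSet A gt') ⊆ adjSet A gt ∧
    adjSet A (adjSet A gt) ⊆ adjSet A gt' ∧
    (IsClosed gt → IsClosed gt' →
      (∀ y : F, a.toFun (b.adjFun y) = bstar.toFun (astar.adjFun y)) →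
      adjSet A gt = gt' ∧
      ∀ u : CStarReg.Unbounded A E F, u.graph = gt → u.GraphRegular) := by
  have hkey := Adjointable.inner_toFun_eq_of_adjFun_comp_eq a b astar bstar hrel
  have hkey' : ∀ y x, ⟪bstar.toFun y, a.toFun x⟫_A = ⟪astar.toFun y, b.toFun x⟫_A := fun y x => by
    rw [← RightCStarModule.star_inner, ← hkey, RightCStarModule.star_inner]
  have hker := fun x => eq_zero_of_inner_eq_of_eq_zero astar hkas hkey (x := x)
  have hker' := fun y => eq_zero_of_inner_eq_of_eq_zero a hka hkey' (x := y)
  have hperp := mk_neg_mem_ortho_pairGraph hkey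
  have hperp' := mk_neg_mem_ortho_pairGraph hkey'
  subst hgt hgt'
  refine ⟨hker, hker', ⟨.ofQuotient a b hker, rfl⟩, ⟨.ofQuotient astar bstar hker', rfl⟩,
    a.isEssential_image_fst_pairGraph b.toFun hka,
    astar.isEssential_image_fst_pairGraph bstar.toFun hkas,
    ⟨.ofOrtho _ fun _ => eq_zero_of_mem_ortho_ortho astar hkas hperp, rfl⟩,
    ⟨.ofOrtho _ fun _ => eq_zero_of_mem_ortho_ortho a hka hperp', rfl⟩,
    adjSet_anti (pairGraph_subset_adjSet hperp'), adjSet_anti (pairGraph_subset_adjSet hperp),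
    fun hcl hcl' hrel' => ?_⟩
  have hsum :=
    Adjointable.pairGraph_add_pairGraph_eq_univ a b astar bstar hrel hrel' hka hkas hcl hcl'
  have hT : pairGraph bstar.toFun (fun y => -astar.toFun y) ⊆ ortho A (pairGraph a.toFun b.toFun) :=
    fun _ ⟨y, hy⟩ => hy ▸ hperp y
  refine ⟨adjSet_eq_pairGraph_of_ortho_eq _ _ (ortho_eq_of_add_eq_univ hT hsum), fun u hu => ?_⟩
  replace hu : u.graph = pairGraph a.toFun b.toFun := hu
  refine u.graphRegular_of_add_eq_univ ?_ (hu ▸ hT) (hu ▸ hsum)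
  rw [EssentiallyDefined, dom, hu]
  exact a.isEssential_image_fst_pairGraph b.toFun hka

end Statements
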